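/- arXiv:2405.18134 — 7 statements merged into one kernel-verified Lean document; each statement's English description precedes it below -/
import Mathlib

section
/- Let {a,b} be an edge of G' ⊆ G, where G contains, besides {a,b}, all edges {a,c} and {c,b} for c ranging over the set C_{ab} of the 2f-1 points minimizing |ac|+|cb| in S \ {a,b}. Then for any set F of edges of G of maximum degree at most f, there exists a shortest path between a and b in the graph G \ F all of whose vertices belong to C_{ab} ∪ {a,b}. -/
open Real

/-- Length of a walk in a graph whose vertices lie in a metric space:
the sum of the metric distances of consecutive vertices. -/
noncomputable def wlen {V : Type*} [PseudoMetricSpace V] {G : SimpleGraph V} {u v : V}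
    (w : G.Walk u v) : ℝ :=
  (w.darts.map fun d : G.Dart => dist d.toProd.1 d.toProd.2).sum

/-- Shortest-path distance between two vertices of a metrically weighted graph. -/
noncomputable def gdist {V : Type*} [PseudoMetricSpace V] (G : SimpleGraph V) (p q : V) : ℝ :=
  sInf {l : ℝ | ∃ w : G.Walk p q, wlen w = l}

/-- The set `F` of edges, viewed as a graph, has maximum degree at most `f`. -/
def maxDegLe {V : Type*} (F : Set (Sym2 V)) (f : ℕ) : Prop :=
  ∀ v : V, {e | e ∈ F ∧ v ∈ e}.encard ≤ (f : ℕ∞)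

section AuxLemmas

variable {V : Type*} [PseudoMetricSpace V] {G : SimpleGraph V} {u v x : V}

lemma wlen_nil : wlen (SimpleGraph.Walk.nil : G.Walk u u) = 0 := by simp [wlen]

lemma wlen_cons (h : G.Adj u x) (w : G.Walk x v) :
    wlen (SimpleGraph.Walk.cons h w) = dist u x + wlen w := by simp [wlen]

lemma wlen_nonneg (w : G.Walk u v) : 0 ≤ wlen w := by
  apply List.sum_nonneg; intro r hr
  simp only [List.mem_map] at hr
  obtain ⟨d, -, rfl⟩ := hr; exact dist_nonneg

lemma wlen_append {w : V} (p : G.Walk u v) (q : G.Walk v w) :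
    wlen (p.append q) = wlen p + wlen q := by
  simp [wlen, SimpleGraph.Walk.darts_append]

lemma dist_le_wlen (w : G.Walk u v) : dist u v ≤ wlen w := by
  induction w with
  | nil => simp [wlen_nil]
  | @cons u x v h w ih =>
    rw [wlen_cons]
    calc dist u v ≤ dist u x + dist x v := dist_triangle ..
    _ ≤ dist u x + wlen w := by linarith

lemma dist_add_dist_le_wlen [DecidableEq V] (w : G.Walk u v) (hx : x ∈ w.support) :
    dist u x + dist x v ≤ wlen w := by
  have hs := w.take_spec hx
  have heq := wlen_append (w.takeUntil x hx) (w.dropUntil x hx)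
  rw [hs] at heq
  have h1 := dist_le_wlen (w.takeUntil x hx)
  have h2 := dist_le_wlen (w.dropUntil x hx)
  linarith

lemma wlen_bypass_le [DecidableEq V] (w : G.Walk u v) : wlen w.bypass ≤ wlen w := by
  induction w with
  | nil => simp [SimpleGraph.Walk.bypass]
  | @cons u x v h w ih =>
    simp only [SimpleGraph.Walk.bypass]
    split_ifs with hs
    · have hsp := w.bypass.take_spec hs
      have heq := wlen_append (w.bypass.takeUntil u hs) (w.bypass.dropUntil u hs)
      rw [hsp] at heq
      have h1 := wlen_nonneg (w.bypass.takeUntil u hs)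
      have h2 : (0:ℝ) ≤ dist u x := dist_nonneg
      rw [wlen_cons]; linarith
    · rw [wlen_cons, wlen_cons]; linarith

lemma blocked_bound {V : Type*} (F : Set (Sym2 V)) (f : ℕ) (hdeg : maxDegLe F f)
    (p q : V) (hpq : s(p, q) ∈ F) (S : Set V) (hS : ∀ c ∈ S, c ≠ q) :
    {c | c ∈ S ∧ s(p, c) ∈ F}.encard ≤ ((f - 1 : ℕ) : ℕ∞) := by
  have hinj : Set.InjOn (fun c => s(p, c)) {c | c ∈ S ∧ s(p, c) ∈ F} := by
    intro x hx y hy hxy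
    exact Sym2.congr_right.mp hxy
  have hsub : (fun c => s(p, c)) '' {c | c ∈ S ∧ s(p, c) ∈ F} ⊆
      {e | e ∈ F ∧ p ∈ e} \ {s(p, q)} := by
    rintro e ⟨c, ⟨hcS, hcF⟩, rfl⟩
    refine ⟨⟨hcF, Sym2.mem_mk_left p c⟩, ?_⟩
    simp only [Set.mem_singleton_iff]
    intro he
    exact hS c hcS (Sym2.congr_right.mp he)
  calc {c | c ∈ S ∧ s(p, c) ∈ F}.encard
      = ((fun c => s(p, c)) '' {c | c ∈ S ∧ s(p, c) ∈ F}).encard := (hinj.encard_image).symm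
    _ ≤ ({e | e ∈ F ∧ p ∈ e} \ {s(p, q)}).encard := Set.encard_mono hsub
    _ = {e | e ∈ F ∧ p ∈ e}.encard - 1 :=
        Set.encard_diff_singleton_of_mem ⟨hpq, Sym2.mem_mk_left p q⟩
    _ ≤ (f : ℕ∞) - 1 := tsub_le_tsub_right (hdeg p) 1
    _ = ((f - 1 : ℕ) : ℕ∞) := (ENat.coe_sub f 1).symm

end AuxLemmas

theorem stmt2 {V : Type*} [Fintype V] [MetricSpace V] (n f : ℕ)
    (hn : Fintype.card V = n) (hf1 : 1 ≤ f) (hf2 : 2 * f ≤ n - 1)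
    (G' G : SimpleGraph V) (C : V → V → Set V)
    -- for each edge {a,b} of G', `C a b` consists of 2f-1 points of S \ {a,b}
    -- minimizing |ac| + |cb|
    (hCsub : ∀ a b, G'.Adj a b → C a b ⊆ ({a, b} : Set V)ᶜ)
    (hCsymm : ∀ a b, C a b = C b a)
    (hCcard : ∀ a b, G'.Adj a b → (C a b).ncard = 2 * f - 1)
    (hCmin : ∀ a b, G'.Adj a b → ∀ c ∈ C a b, ∀ x : V, x ≠ a → x ≠ b → x ∉ C a b →
      dist a c + dist c b ≤ dist a x + dist x b)
    -- G is obtained from G' by adding, for each edge {a,b} of G', the edges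
    -- {a,c} and {c,b} for all c in C a b
    (hG : ∀ x y : V, G.Adj x y ↔ G'.Adj x y ∨ ∃ a b : V, G'.Adj a b ∧
      ((x = a ∧ y ∈ C a b) ∨ (x = b ∧ y ∈ C a b) ∨
       (y = a ∧ x ∈ C a b) ∨ (y = b ∧ x ∈ C a b)))
    (F : Set (Sym2 V)) (hF : F ⊆ G.edgeSet) (hdeg : maxDegLe F f)
    (a b : V) (hab : G'.Adj a b) :
    ∃ w : (G.deleteEdges F).Walk a b, w.IsPath ∧
      wlen w = gdist (G.deleteEdges F) a b ∧
      ∀ v ∈ w.support, v ∈ C a b ∪ {a, b} := by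
  classical
  set H := G.deleteEdges F with hH
  have hne : a ≠ b := hab.ne
  have hGab : G.Adj a b := (hG a b).mpr (Or.inl hab)
  -- the counting argument: if the edge {a,b} is faulty, some c ∈ C a b is fully available
  have key : s(a, b) ∈ F → ∃ c ∈ C a b, s(a, c) ∉ F ∧ s(c, b) ∉ F := by
    intro habF
    by_contra hcon
    push_neg at hcon
    have hCfin : (C a b).Finite := Set.toFinite _
    have hsplit : C a b ⊆ {c | c ∈ C a b ∧ s(a, c) ∈ F} ∪ {c | c ∈ C a b ∧ s(b, c) ∈ F} := by
      intro c hc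
      by_cases h1 : s(a, c) ∈ F
      · exact Or.inl ⟨hc, h1⟩
      · refine Or.inr ⟨hc, ?_⟩
        have := hcon c hc h1
        rwa [Sym2.eq_swap] at this
    have hbound1 : {c | c ∈ C a b ∧ s(a, c) ∈ F}.encard ≤ ((f - 1 : ℕ) : ℕ∞) := by
      refine blocked_bound F f hdeg a b habF (C a b) ?_
      intro c hc
      have := hCsub a b hab hc
      simp only [Set.mem_compl_iff, Set.mem_insert_iff, Set.mem_singleton_iff] at this
      tauto
    have hbound2 : {c | c ∈ C a b ∧ s(b, c) ∈ F}.encard ≤ ((f - 1 : ℕ) : ℕ∞) := by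
      refine blocked_bound F f hdeg b a (by rwa [Sym2.eq_swap]) (C a b) ?_
      intro c hc
      have := hCsub a b hab hc
      simp only [Set.mem_compl_iff, Set.mem_insert_iff, Set.mem_singleton_iff] at this
      tauto
    have hC : (C a b).encard = ((2 * f - 1 : ℕ) : ℕ∞) := by
      rw [Set.encard_eq_coe_toFinset_card, ← Set.ncard_eq_toFinset_card', hCcard a b hab]
    have hle : (C a b).encard ≤ ((f - 1 : ℕ) : ℕ∞) + ((f - 1 : ℕ) : ℕ∞) :=
      le_trans (le_trans (Set.encard_mono hsplit) (Set.encard_union_le _ _))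
        (add_le_add hbound1 hbound2)
    rw [hC, ← Nat.cast_add, Nat.cast_le] at hle
    omega
  -- a candidate walk inside C a b ∪ {a, b}
  have exW : ∃ w0 : H.Walk a b, w0.IsPath ∧ (∀ v ∈ w0.support, v ∈ C a b ∪ {a, b}) ∧
      (∀ x : V, x ≠ a → x ≠ b → x ∉ C a b → wlen w0 ≤ dist a x + dist x b) := by
    by_cases habF : s(a, b) ∈ F
    · obtain ⟨c, hc, h1, h2⟩ := key habF
      have hmem := hCsub a b hab hc
      simp only [Set.mem_compl_iff, Set.mem_insert_iff, Set.mem_singleton_iff] at hmem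
      push_neg at hmem
      obtain ⟨hca, hcb⟩ := hmem
      have A1 : H.Adj a c := by
        rw [hH, SimpleGraph.deleteEdges_adj]
        exact ⟨(hG a c).mpr (Or.inr ⟨a, b, hab, Or.inl ⟨rfl, hc⟩⟩), h1⟩
      have A2 : H.Adj c b := by
        rw [hH, SimpleGraph.deleteEdges_adj]
        exact ⟨(hG c b).mpr (Or.inr ⟨a, b, hab, Or.inr (Or.inr (Or.inr ⟨rfl, hc⟩))⟩), h2⟩
      refine ⟨.cons A1 (.cons A2 .nil), ?_, ?_, ?_⟩
      · simp [SimpleGraph.Walk.isPath_def, Ne.symm hca, hcb, hne]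
      · intro v hv
        simp only [SimpleGraph.Walk.support_cons, SimpleGraph.Walk.support_nil,
          List.mem_cons, List.mem_singleton] at hv
        rcases hv with rfl | rfl | rfl | h
        · exact Or.inr (Or.inl rfl)
        · exact Or.inl hc
        · exact Or.inr (Or.inr rfl)
        · simp at h
      · intro x hxa hxb hxC
        have : wlen (SimpleGraph.Walk.cons A1 (SimpleGraph.Walk.cons A2 .nil)) =
            dist a c + dist c b := by
          rw [wlen_cons, wlen_cons, wlen_nil]; ring
        rw [this]
        exact hCmin a b hab c hc x hxa hxb hxC
    · have A : H.Adj a b := by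
        rw [hH, SimpleGraph.deleteEdges_adj]
        exact ⟨hGab, habF⟩
      refine ⟨.cons A .nil, ?_, ?_, ?_⟩
      · simp [SimpleGraph.Walk.isPath_def, hne]
      · intro v hv
        simp only [SimpleGraph.Walk.support_cons, SimpleGraph.Walk.support_nil,
          List.mem_cons, List.mem_singleton] at hv
        rcases hv with rfl | rfl | h
        · exact Or.inr (Or.inl rfl)
        · exact Or.inr (Or.inr rfl)
        · simp at h
      · intro x hxa hxb hxC
        have : wlen (SimpleGraph.Walk.cons A .nil) = dist a b := by
          rw [wlen_cons, wlen_nil]; ring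
        rw [this]
        exact dist_triangle a x b
  obtain ⟨w0, hw0p, hw0s, hw0min⟩ := exW
  -- a path of minimal length
  have : Nonempty (H.Path a b) := ⟨⟨w0, hw0p⟩⟩
  obtain ⟨P, hP⟩ := Finite.exists_min (fun p : H.Path a b => wlen p.1)
  have hLB : ∀ w : H.Walk a b, wlen P.1 ≤ wlen w := fun w =>
    le_trans (hP ⟨w.bypass, w.bypass_isPath⟩) (wlen_bypass_le w)
  have hbdd : BddBelow {l : ℝ | ∃ w : H.Walk a b, wlen w = l} := by
    refine ⟨0, ?_⟩
    rintro l ⟨w, rfl⟩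
    exact wlen_nonneg w
  have hgd : wlen P.1 = gdist H a b := by
    apply le_antisymm
    · refine le_csInf ⟨wlen P.1, P.1, rfl⟩ ?_
      rintro l ⟨w, rfl⟩
      exact hLB w
    · exact csInf_le hbdd ⟨P.1, rfl⟩
  by_cases hsupp : ∀ v ∈ P.1.support, v ∈ C a b ∪ {a, b}
  · exact ⟨P.1, P.2, hgd, hsupp⟩
  · push_neg at hsupp
    obtain ⟨x, hxsupp, hxout⟩ := hsupp
    simp only [Set.mem_union, Set.mem_insert_iff, Set.mem_singleton_iff] at hxout
    push_neg at hxout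
    obtain ⟨hxC, hxa, hxb⟩ := hxout
    have h1 : wlen w0 ≤ dist a x + dist x b := hw0min x hxa hxb hxC
    have h2 : dist a x + dist x b ≤ wlen P.1 := dist_add_dist_le_wlen P.1 hxsupp
    have h3 : wlen P.1 ≤ wlen w0 := hLB w0
    refine ⟨w0, hw0p, ?_, hw0s⟩
    rw [← hgd]
    linarith
end

section
/- Let C be a cone in R^d with apex at the origin and angular diameter at most θ, where 0 < θ < π/4, let p, q be distinct points with q ∈ C + p, let ℓ be a ray emanating from p contained in C + p, and let r ∈ (C+p) \ {p} be a point whose orthogonal projection onto ℓ is at least as close to p as the orthogonal projection of q onto ℓ. Then |rq| ≤ |pq| − (cos θ − sin θ)·|pr|. -/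
open Real

set_option maxHeartbeats 1000000 in
open RealInnerProductSpace in
theorem stmt10 {d : ℕ} (θ : ℝ) (hθ0 : 0 < θ) (hθ1 : θ < π / 4)
    (C : Set (EuclideanSpace ℝ (Fin d)))
    -- C is a cone with apex at the origin
    (hcone : ∀ x ∈ C, ∀ t : ℝ, 0 ≤ t → t • x ∈ C)
    -- the angular diameter of C is at most θ
    (hang : ∀ x ∈ C, x ≠ 0 → ∀ y ∈ C, y ≠ 0 → InnerProductGeometry.angle x y ≤ θ)
    (p q : EuclideanSpace ℝ (Fin d)) (hpq : p ≠ q) (hq : q - p ∈ C)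
    -- ℓ is a ray emanating from p, with unit direction u, contained in C + p
    (u : EuclideanSpace ℝ (Fin d)) (hu : ‖u‖ = 1)
    (hray : ∀ t : ℝ, 0 ≤ t → t • u ∈ C)
    (r : EuclideanSpace ℝ (Fin d)) (hr : r - p ∈ C) (hrp : r ≠ p)
    -- the orthogonal projection of r onto ℓ is at least as close to p
    -- as the orthogonal projection of q onto ℓ
    (hproj : |⟪r - p, u⟫| ≤ |⟪q - p, u⟫|) :
    dist r q ≤ dist p q - (Real.cos θ - Real.sin θ) * dist p r := by
  have hπ : θ < π := lt_trans hθ1 (by linarith [Real.pi_pos])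
  set x := r - p with hxdef
  set y := q - p with hydef
  have hx0 : x ≠ 0 := sub_ne_zero.mpr hrp
  have hy0 : y ≠ 0 := sub_ne_zero.mpr (Ne.symm hpq)
  have hu0 : u ≠ 0 := by intro h; rw [h, norm_zero] at hu; norm_num at hu
  have huC : u ∈ C := by simpa using hray 1 zero_le_one
  have hcos : ∀ a : EuclideanSpace ℝ (Fin d), a ∈ C → a ≠ 0 →
      ∀ b ∈ C, b ≠ 0 → Real.cos θ * (‖a‖ * ‖b‖) ≤ ⟪a, b⟫ := by
    intro a ha ha0 b hb hb0
    have hang' := hang a ha ha0 b hb hb0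
    have h1 : Real.cos θ ≤ Real.cos (InnerProductGeometry.angle a b) :=
      Real.cos_le_cos_of_nonneg_of_le_pi (InnerProductGeometry.angle_nonneg a b) hπ.le hang'
    have h2 : Real.cos (InnerProductGeometry.angle a b) = ⟪a, b⟫ / (‖a‖ * ‖b‖) :=
      InnerProductGeometry.cos_angle a b
    have hna : 0 < ‖a‖ := norm_pos_iff.mpr ha0
    have hnb : 0 < ‖b‖ := norm_pos_iff.mpr hb0
    have := mul_le_mul_of_nonneg_right h1 (le_of_lt (mul_pos hna hnb))
    rw [h2, div_mul_cancel₀] at this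
    · exact this
    · positivity
  have hcosθ : 0 < Real.cos θ := Real.cos_pos_of_mem_Ioo
    ⟨by linarith [Real.pi_pos], by linarith [Real.pi_gt_three]⟩
  have hsinθ : 0 < Real.sin θ := Real.sin_pos_of_pos_of_lt_pi hθ0 hπ
  have hxu : Real.cos θ * ‖x‖ ≤ ⟪x, u⟫ := by
    have := hcos x hr hx0 u huC hu0; rwa [hu, mul_one] at this
  have hyu : Real.cos θ * ‖y‖ ≤ ⟪y, u⟫ := by
    have := hcos y hq hy0 u huC hu0; rwa [hu, mul_one] at this
  have hxy : Real.cos θ * (‖x‖ * ‖y‖) ≤ ⟪x, y⟫ := hcos x hr hx0 y hq hy0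
  have hnx : 0 < ‖x‖ := norm_pos_iff.mpr hx0
  have hny : 0 < ‖y‖ := norm_pos_iff.mpr hy0
  have hxupos : 0 < ⟪x, u⟫ := lt_of_lt_of_le (by positivity) hxu
  have hyupos : 0 < ⟪y, u⟫ := lt_of_lt_of_le (by positivity) hyu
  have hproj' : ⟪x, u⟫ ≤ ⟪y, u⟫ := by
    rwa [abs_of_pos hxupos, abs_of_pos hyupos] at hproj
  have hCS : ⟪y, u⟫ ≤ ‖y‖ := by
    have := real_inner_le_norm y u; rwa [hu, mul_one] at this
  have hkey : Real.cos θ * ‖x‖ ≤ ‖y‖ := le_trans hxu (le_trans hproj' hCS)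
  have hdist1 : dist r q = ‖x - y‖ := by
    rw [dist_eq_norm, hxdef, hydef]; congr 1; abel
  have hdist2 : dist p q = ‖y‖ := by rw [dist_eq_norm']
  have hdist3 : dist p r = ‖x‖ := by rw [dist_eq_norm', hxdef]
  rw [hdist1, hdist2, hdist3]
  have hsq : ‖x - y‖ ^ 2 = ‖x‖ ^ 2 - 2 * ⟪x, y⟫ + ‖y‖ ^ 2 := by
    rw [norm_sub_sq_real]
  have hrhs : 0 ≤ ‖y‖ - (Real.cos θ - Real.sin θ) * ‖x‖ := by nlinarith
  have hsq2 : ‖x - y‖ ^ 2 ≤ (‖y‖ - (Real.cos θ - Real.sin θ) * ‖x‖) ^ 2 := by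
    have hpyth := Real.sin_sq_add_cos_sq θ
    nlinarith [mul_nonneg (mul_nonneg hsinθ.le hnx.le) (sub_nonneg.mpr hkey), sq_nonneg ‖x‖, hsq, hxy]
  nlinarith [norm_nonneg (x - y)]
end

section
/- Let C be a cone in R^d with apex at the origin and angular diameter at most θ, where 0 < θ < π/4, let p, q be distinct points with q ∈ C + p, and let r ∈ (C+p) \ {p} satisfy |pr| ≤ |pq|. Then |rq| ≤ |pq| − (cos θ − sin θ)·|pr|. -/
open Real

/-
With `u = q - p` and `v = r - p`, the angle bound gives `⟪u, v⟫ ≥ cos θ ‖u‖ ‖v‖`, so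
`‖u - v‖² ≤ ‖u‖² - 2 cos θ ‖u‖ ‖v‖ + ‖v‖²`. Using `cos² θ + sin² θ = 1`, the square of the claimed
bound exceeds this by `2 sin θ ‖v‖ (‖u‖ - cos θ ‖v‖)`, which is nonnegative because `‖v‖ ≤ ‖u‖`.
-/

open InnerProductGeometry

theorem InnerProductGeometry.cos_mul_norm_mul_norm_le_inner_of_angle_le {E : Type*}
    [NormedAddCommGroup E] [InnerProductSpace ℝ E] {u v : E} {θ : ℝ} (hθπ : θ ≤ π)
    (hangle : angle u v ≤ θ) : cos θ * (‖u‖ * ‖v‖) ≤ inner ℝ u v := by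
  rw [← cos_angle_mul_norm_mul_norm]
  exact mul_le_mul_of_nonneg_right
    (cos_le_cos_of_nonneg_of_le_pi (angle_nonneg u v) hθπ hangle) (by positivity)

theorem InnerProductGeometry.norm_sub_le_of_angle_le {E : Type*}
    [NormedAddCommGroup E] [InnerProductSpace ℝ E] {u v : E} {θ : ℝ} (hθ0 : 0 ≤ θ)
    (hθπ : θ ≤ π) (hangle : angle u v ≤ θ) (hvu : ‖v‖ ≤ ‖u‖) :
    ‖u - v‖ ≤ ‖u‖ - (cos θ - sin θ) * ‖v‖ := by
  have hinner := cos_mul_norm_mul_norm_le_inner_of_angle_le hθπ hangle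
  have hsin : 0 ≤ sin θ := sin_nonneg_of_nonneg_of_le_pi hθ0 hθπ
  have hcos : cos θ ≤ 1 := cos_le_one θ
  have hgap : 0 ≤ ‖u‖ - cos θ * ‖v‖ := by nlinarith [norm_nonneg v]
  have hbound : 0 ≤ ‖u‖ - (cos θ - sin θ) * ‖v‖ := by nlinarith [norm_nonneg v]
  refine (pow_le_pow_iff_left₀ (norm_nonneg _) hbound two_ne_zero).mp ?_
  calc ‖u - v‖ ^ 2 = ‖u‖ ^ 2 - 2 * inner ℝ u v + ‖v‖ ^ 2 := norm_sub_sq_real u v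
    _ ≤ ‖u‖ ^ 2 - 2 * (cos θ * (‖u‖ * ‖v‖)) + ‖v‖ ^ 2 := by linarith
    _ ≤ (‖u‖ - (cos θ - sin θ) * ‖v‖) ^ 2 := by
      linear_combination 2 * mul_nonneg (mul_nonneg hsin (norm_nonneg v)) hgap
        - ‖v‖ ^ 2 * sin_sq_add_cos_sq θ

theorem stmt11_general {d : ℕ} (θ : ℝ) (hθ0 : 0 < θ) (hθ1 : θ < π / 4)
    (C : Set (EuclideanSpace ℝ (Fin d)))
    -- the angular diameter of C is at most θ
    (hang : ∀ x ∈ C, x ≠ 0 → ∀ y ∈ C, y ≠ 0 → InnerProductGeometry.angle x y ≤ θ)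
    (p q : EuclideanSpace ℝ (Fin d)) (hpq : p ≠ q) (hq : q - p ∈ C)
    (r : EuclideanSpace ℝ (Fin d)) (hr : r - p ∈ C) (hrp : r ≠ p)
    (hrclose : dist p r ≤ dist p q) :
    dist r q ≤ dist p q - (Real.cos θ - Real.sin θ) * dist p r := by
  have hangle : angle (q - p) (r - p) ≤ θ :=
    hang _ hq (sub_ne_zero.mpr hpq.symm) _ hr (sub_ne_zero.mpr hrp)
  simp only [dist_comm p, dist_comm r q, dist_eq_norm] at hrclose ⊢
  rw [← sub_sub_sub_cancel_right q r p]
  exact norm_sub_le_of_angle_le hθ0.le (by linarith [pi_pos]) hangle hrclose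

theorem stmt11 {d : ℕ} (θ : ℝ) (hθ0 : 0 < θ) (hθ1 : θ < π / 4)
    (C : Set (EuclideanSpace ℝ (Fin d)))
    -- C is a cone with apex at the origin
    (hcone : ∀ x ∈ C, ∀ t : ℝ, 0 ≤ t → t • x ∈ C)
    -- the angular diameter of C is at most θ
    (hang : ∀ x ∈ C, x ≠ 0 → ∀ y ∈ C, y ≠ 0 → InnerProductGeometry.angle x y ≤ θ)
    (p q : EuclideanSpace ℝ (Fin d)) (hpq : p ≠ q) (hq : q - p ∈ C)
    (r : EuclideanSpace ℝ (Fin d)) (hr : r - p ∈ C) (hrp : r ≠ p)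
    (hrclose : dist p r ≤ dist p q) :
    dist r q ≤ dist p q - (Real.cos θ - Real.sin θ) * dist p r :=
  stmt11_general θ hθ0 hθ1 C hang p q hpq hq r hr hrp hrclose
end

section
/- Let {p,q} be an edge of K_S \ F that is not an edge of the graph Θ = Θ(θ,2f+1), and let C be a cone of the collection with q ∈ C + p. Then there exists a point r in S_{p,C} with r ≠ q such that the orthogonal projection of r onto the ray ℓ_C + p is at least as close to p as the projection of q, the edge {p,r} is in Θ \ F, and the edge {r,q} is in K_S \ F. -/
open Real

/-- The set of points of `S`, as a type. -/
abbrev Pts {d : ℕ} (S : Finset (EuclideanSpace ℝ (Fin d))) : Type :=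
  {x : EuclideanSpace ℝ (Fin d) // x ∈ S}

open RealInnerProductSpace in
theorem stmt12 {d k : ℕ} (f : ℕ) (θ : ℝ) (hθ0 : 0 < θ) (hθ1 : θ < π / 4)
    -- a collection of k cones with apex at the origin, angular diameter at most θ,
    -- covering ℝ^d, each equipped with a unit ray direction contained in the cone
    (cone : Fin k → Set (EuclideanSpace ℝ (Fin d)))
    (hcone : ∀ i, ∀ x ∈ cone i, ∀ t : ℝ, 0 ≤ t → t • x ∈ cone i)
    (hang : ∀ i, ∀ x ∈ cone i, x ≠ 0 → ∀ y ∈ cone i, y ≠ 0 →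
      InnerProductGeometry.angle x y ≤ θ)
    (hcover : ∀ x : EuclideanSpace ℝ (Fin d), ∃ i, x ∈ cone i)
    (u : Fin k → EuclideanSpace ℝ (Fin d)) (hu : ∀ i, ‖u i‖ = 1)
    (hray : ∀ i, ∀ t : ℝ, 0 ≤ t → t • u i ∈ cone i)
    (S : Finset (EuclideanSpace ℝ (Fin d)))
    -- for each p and each cone, N p i is the set of min(2f+1, |S_{p,C}|) points of
    -- S_{p,C} whose orthogonal projections onto ℓ_C + p are closest to p
    (N : Pts S → Fin k → Set (EuclideanSpace ℝ (Fin d)))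
    (hNsub : ∀ p i, N p i ⊆ {x | x ∈ S ∧ x ≠ ↑p ∧ x - ↑p ∈ cone i})
    (hNcard : ∀ p i, (N p i).ncard =
      min (2 * f + 1) {x | x ∈ S ∧ x ≠ ↑p ∧ x - ↑p ∈ cone i}.ncard)
    (hNclose : ∀ p i, ∀ r ∈ N p i, ∀ x : EuclideanSpace ℝ (Fin d),
      x ∈ S → x ≠ ↑p → x - ↑p ∈ cone i → x ∉ N p i →
      |⟪r - ↑p, u i⟫| ≤ |⟪x - ↑p, u i⟫|)
    -- the graph Θ(θ, 2f+1)
    (Θ : SimpleGraph (Pts S))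
    (hΘ : ∀ x y : Pts S, Θ.Adj x y ↔ x ≠ y ∧ ∃ i, (↑y ∈ N x i ∨ ↑x ∈ N y i))
    (F : Set (Sym2 (Pts S))) (hF : F ⊆ Θ.edgeSet) (hdeg : maxDegLe F f)
    -- {p,q} is an edge of K_S \ F that is not an edge of Θ
    (p q : Pts S) (hpq : p ≠ q) (hpqF : s(p, q) ∉ F) (hnadj : ¬ Θ.Adj p q)
    (i : Fin k) (hqi : (↑q : EuclideanSpace ℝ (Fin d)) - ↑p ∈ cone i) :
    ∃ r : Pts S, (↑r : EuclideanSpace ℝ (Fin d)) ∈ N p i ∧ r ≠ q ∧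
      |⟪(↑r : EuclideanSpace ℝ (Fin d)) - ↑p, u i⟫| ≤
        |⟪(↑q : EuclideanSpace ℝ (Fin d)) - ↑p, u i⟫| ∧
      (Θ.deleteEdges F).Adj p r ∧ s(r, q) ∉ F := by

  classical
  -- Notation
  set T : Set (EuclideanSpace ℝ (Fin d)) :=
    {x | x ∈ S ∧ x ≠ ↑p ∧ x - ↑p ∈ cone i} with hT
  have hqp : (↑q : EuclideanSpace ℝ (Fin d)) ≠ ↑p := fun h => hpq (Subtype.coe_injective h.symm)
  have hqT : (↑q : EuclideanSpace ℝ (Fin d)) ∈ T := ⟨q.2, hqp, hqi⟩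
  have hqN : (↑q : EuclideanSpace ℝ (Fin d)) ∉ N p i := fun h =>
    hnadj ((hΘ p q).mpr ⟨hpq, i, Or.inl h⟩)
  have hTfin : T.Finite := Set.Finite.subset S.finite_toSet (fun x hx => hx.1)
  have hNfin : (N p i).Finite := hTfin.subset (hNsub p i)
  -- |N p i| = 2f+1
  have hcard : (N p i).ncard = 2 * f + 1 := by
    rcases le_or_gt T.ncard (2 * f + 1) with h | h
    · exfalso
      have heq : N p i = T := Set.eq_of_subset_of_ncard_le (hNsub p i)
        (by rw [hNcard p i, min_eq_right h]) hTfin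
      exact hqN (heq ▸ hqT)
    · rw [hNcard p i, min_eq_left h.le]
  -- lift to Pts S
  set A : Set (Pts S) := Subtype.val ⁻¹' (N p i) with hA
  have hAcard : A.encard = (2 * f + 1 : ℕ) := by
    rw [hA, Set.encard_preimage_of_injective_subset_range Subtype.coe_injective
      (by rintro x hx; exact ⟨⟨x, (hNsub p i hx).1⟩, rfl⟩)]
    rw [hNfin.encard_eq_coe_toFinset_card, ← Set.ncard_eq_toFinset_card _ hNfin, hcard]
  have hrp : ∀ r ∈ A, r ≠ p := by
    intro r hr h
    exact (hNsub p i hr).2.1 (by rw [h])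
  -- bad sets
  set B1 : Set (Pts S) := {r ∈ A | s(p, r) ∈ F} with hB1
  set B2 : Set (Pts S) := {r ∈ A | s(r, q) ∈ F} with hB2
  have hB1card : B1.encard ≤ (f : ℕ∞) := by
    have hinj : Set.InjOn (fun r : Pts S => s(p, r)) B1 := by
      intro a ha b hb hab
      simp only [Sym2.eq, Sym2.rel_iff', Prod.mk.injEq, Prod.swap_prod_mk] at hab
      rcases hab with ⟨-, h⟩ | ⟨h1, h2⟩
      · exact h
      · exact absurd h2 (hrp a ha.1)
    calc B1.encard = ((fun r : Pts S => s(p, r)) '' B1).encard := (hinj.encard_image).symm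
      _ ≤ {e | e ∈ F ∧ p ∈ e}.encard := Set.encard_le_encard (by
          rintro e ⟨r, hr, rfl⟩
          exact ⟨hr.2, Sym2.mem_mk_left _ _⟩)
      _ ≤ (f : ℕ∞) := hdeg p
  have hB2card : B2.encard ≤ (f : ℕ∞) := by
    have hinj : Set.InjOn (fun r : Pts S => s(r, q)) B2 := by
      intro a ha b hb hab
      simp only [Sym2.eq, Sym2.rel_iff', Prod.mk.injEq, Prod.swap_prod_mk] at hab
      rcases hab with ⟨h, -⟩ | ⟨h1, h2⟩
      · exact h
      · exact (hqN (by rw [← h1]; exact ha.1)).elim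
    calc B2.encard = ((fun r : Pts S => s(r, q)) '' B2).encard := (hinj.encard_image).symm
      _ ≤ {e | e ∈ F ∧ q ∈ e}.encard := Set.encard_le_encard (by
          rintro e ⟨r, hr, rfl⟩
          exact ⟨hr.2, Sym2.mem_mk_right _ _⟩)
      _ ≤ (f : ℕ∞) := hdeg q
  -- find a good r
  have : ¬ A ⊆ B1 ∪ B2 := by
    intro hsub
    have := (Set.encard_le_encard hsub).trans (Set.encard_union_le B1 B2)
    rw [hAcard] at this
    have : ((2 * f + 1 : ℕ) : ℕ∞) ≤ (f : ℕ∞) + (f : ℕ∞) :=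
      this.trans (add_le_add hB1card hB2card)
    rw [← Nat.cast_add] at this
    have := Nat.cast_le.mp this
    omega
  obtain ⟨r, hrA, hrB⟩ := Set.not_subset.mp this
  rw [Set.mem_union] at hrB
  push_neg at hrB
  have hrN : (↑r : EuclideanSpace ℝ (Fin d)) ∈ N p i := hrA
  have hrq : r ≠ q := fun h => hqN (h ▸ hrN)
  have hrF : s(p, r) ∉ F := fun h => hrB.1 ⟨hrA, h⟩
  have hrqF : s(r, q) ∉ F := fun h => hrB.2 ⟨hrA, h⟩
  refine ⟨r, hrN, hrq, hNclose p i _ hrN _ q.2 hqp hqi hqN, ?_, hrqF⟩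
  rw [SimpleGraph.deleteEdges_adj]
  exact ⟨(hΘ p r).mpr ⟨fun h => hrp r hrA h.symm, i, Or.inl hrN⟩, hrF⟩
end

section
/- For every edge {p,q} of K_S \ F, the shortest-path distance between p and q in the graph Θ(θ,2f+1) \ F is at most t·|pq|, where t = 1/(cos θ − sin θ). -/
open Real

lemma wlen_cons_s13 {V : Type*} [PseudoMetricSpace V] {G : SimpleGraph V} {a b c : V}
    (h : G.Adj a b) (w : G.Walk b c) :
    wlen (SimpleGraph.Walk.cons h w) = dist a b + wlen w := by simp [wlen]

lemma wlen_nonneg_s13 {V : Type*} [PseudoMetricSpace V] {G : SimpleGraph V} {a b : V}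
    (w : G.Walk a b) : 0 ≤ wlen w := by
  apply List.sum_nonneg
  intro x hx
  simp only [List.mem_map] at hx
  obtain ⟨d, -, rfl⟩ := hx
  exact dist_nonneg

open RealInnerProductSpace in
lemma key_geom {E : Type*} [NormedAddCommGroup E] [InnerProductSpace ℝ E]
    {θ : ℝ} (hθ0 : 0 < θ) (hθ1 : θ < π/4) {v w u : E} (hu : ‖u‖ = 1)
    (hv : v ≠ 0) (hvw : InnerProductGeometry.angle v w ≤ θ)
    (hvu : InnerProductGeometry.angle v u ≤ θ)
    (hproj : |⟪v, u⟫| ≤ |⟪w, u⟫|) :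
    ‖w - v‖ ≤ ‖w‖ - (Real.cos θ - Real.sin θ) * ‖v‖ := by
  have hθpi : θ ≤ π := le_of_lt (hθ1.trans_le (by linarith [Real.pi_pos]))
  have hcosθ : (0:ℝ) < Real.cos θ := Real.cos_pos_of_mem_Ioo
    ⟨by linarith [Real.pi_pos], by linarith [Real.pi_gt_three]⟩
  have hsinθ : (0:ℝ) < Real.sin θ := Real.sin_pos_of_pos_of_lt_pi hθ0
    (by linarith [Real.pi_gt_three])
  have hvn : (0:ℝ) < ‖v‖ := norm_pos_iff.2 hv
  have hwn : (0:ℝ) ≤ ‖w‖ := norm_nonneg w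
  have hcos : ∀ x : E, InnerProductGeometry.angle v x ≤ θ →
      Real.cos θ ≤ Real.cos (InnerProductGeometry.angle v x) := fun x hx =>
    Real.cos_le_cos_of_nonneg_of_le_pi (InnerProductGeometry.angle_nonneg v x)
      hθpi hx
  have hinner : ∀ x : E, x ≠ 0 →
      ⟪v, x⟫ = ‖v‖ * ‖x‖ * Real.cos (InnerProductGeometry.angle v x) := by
    intro x hx0
    rw [InnerProductGeometry.cos_angle, ← mul_div_assoc,
      mul_div_cancel_left₀ _ (mul_pos hvn (norm_pos_iff.2 hx0)).ne']
  have h1 : ‖v‖ * Real.cos θ ≤ ⟪v, u⟫ := by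
    have hu0 : u ≠ 0 := fun h => by simp [h] at hu
    rw [hinner u hu0, hu]
    nlinarith [hcos u hvu]
  have h2 : |⟪w, u⟫| ≤ ‖w‖ := by
    calc |⟪w, u⟫| ≤ ‖w‖ * ‖u‖ := abs_real_inner_le_norm w u
    _ = ‖w‖ := by rw [hu, mul_one]
  have h3 : ‖v‖ * Real.cos θ ≤ ‖w‖ := by
    have : ‖v‖ * Real.cos θ ≤ |⟪v, u⟫| := le_trans h1 (le_abs_self _)
    linarith [hproj, h2]
  have h4 : ‖v‖ * ‖w‖ * Real.cos θ ≤ ⟪v, w⟫ := by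
    rcases eq_or_ne w 0 with rfl | hw0
    · simp
    rw [hinner w hw0]
    exact mul_le_mul_of_nonneg_left (hcos w hvw) (by positivity)
  have hsq : ‖w - v‖^2 = ‖w‖^2 + ‖v‖^2 - 2 * ⟪v, w⟫ := by
    rw [norm_sub_sq_real, real_inner_comm w v]; ring
  have hrhs : 0 ≤ ‖w‖ - (Real.cos θ - Real.sin θ) * ‖v‖ := by nlinarith
  have hc2 : Real.cos θ^2 + Real.sin θ^2 = 1 := by
    rw [add_comm]; exact Real.sin_sq_add_cos_sq θ
  have hsq2 : ‖w - v‖^2 ≤ (‖w‖ - (Real.cos θ - Real.sin θ) * ‖v‖)^2 := by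
    rw [hsq]
    nlinarith [h4, mul_nonneg hsinθ.le (mul_nonneg hvn.le (sub_nonneg.2 h3))]
  nlinarith [norm_nonneg (w - v), hrhs]

open RealInnerProductSpace in
theorem stmt13 {d k : ℕ} (f : ℕ) (θ : ℝ) (hθ0 : 0 < θ) (hθ1 : θ < π / 4)
    -- a collection of k cones with apex at the origin, angular diameter at most θ,
    -- covering ℝ^d, each equipped with a unit ray direction contained in the cone
    (cone : Fin k → Set (EuclideanSpace ℝ (Fin d)))
    (hcone : ∀ i, ∀ x ∈ cone i, ∀ t : ℝ, 0 ≤ t → t • x ∈ cone i)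
    (hang : ∀ i, ∀ x ∈ cone i, x ≠ 0 → ∀ y ∈ cone i, y ≠ 0 →
      InnerProductGeometry.angle x y ≤ θ)
    (hcover : ∀ x : EuclideanSpace ℝ (Fin d), ∃ i, x ∈ cone i)
    (u : Fin k → EuclideanSpace ℝ (Fin d)) (hu : ∀ i, ‖u i‖ = 1)
    (hray : ∀ i, ∀ t : ℝ, 0 ≤ t → t • u i ∈ cone i)
    (S : Finset (EuclideanSpace ℝ (Fin d)))
    -- for each p and each cone, N p i is the set of min(2f+1, |S_{p,C}|) points of
    -- S_{p,C} whose orthogonal projections onto ℓ_C + p are closest to p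
    (N : Pts S → Fin k → Set (EuclideanSpace ℝ (Fin d)))
    (hNsub : ∀ p i, N p i ⊆ {x | x ∈ S ∧ x ≠ ↑p ∧ x - ↑p ∈ cone i})
    (hNcard : ∀ p i, (N p i).ncard =
      min (2 * f + 1) {x | x ∈ S ∧ x ≠ ↑p ∧ x - ↑p ∈ cone i}.ncard)
    (hNclose : ∀ p i, ∀ r ∈ N p i, ∀ x : EuclideanSpace ℝ (Fin d),
      x ∈ S → x ≠ ↑p → x - ↑p ∈ cone i → x ∉ N p i →
      |⟪r - ↑p, u i⟫| ≤ |⟪x - ↑p, u i⟫|)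
    -- the graph Θ(θ, 2f+1)
    (Θ : SimpleGraph (Pts S))
    (hΘ : ∀ x y : Pts S, Θ.Adj x y ↔ x ≠ y ∧ ∃ i, (↑y ∈ N x i ∨ ↑x ∈ N y i))
    (F : Set (Sym2 (Pts S))) (hF : F ⊆ Θ.edgeSet) (hdeg : maxDegLe F f)
    -- {p,q} is an edge of K_S \ F
    (p q : Pts S) (hpq : p ≠ q) (hpqF : s(p, q) ∉ F) :
    gdist (Θ.deleteEdges F) p q ≤ (1 / (Real.cos θ - Real.sin θ)) * dist p q := by
  set c : ℝ := Real.cos θ - Real.sin θ with hcdef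
  have hθ2 : θ < π / 2 := by linarith [Real.pi_pos]
  have hc0 : 0 < c := by
    have h1 : Real.sin θ < Real.sin (π/4) :=
      Real.sin_lt_sin_of_lt_of_le_pi_div_two (by linarith) (by linarith [Real.pi_pos]) hθ1
    have h2 : Real.cos (π/4) < Real.cos θ :=
      Real.cos_lt_cos_of_nonneg_of_le_pi hθ0.le (by linarith [Real.pi_pos]) hθ1
    have h3 : Real.sin (π/4) = Real.cos (π/4) := by
      rw [Real.sin_pi_div_four, Real.cos_pi_div_four]
    simp only [hcdef]; linarith
  have ht1 : (1:ℝ) ≤ 1 / c := by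
    rw [le_div_iff₀ hc0]
    have : Real.sin θ > 0 := Real.sin_pos_of_pos_of_lt_pi hθ0 (by linarith [Real.pi_pos])
    have : Real.cos θ ≤ 1 := Real.cos_le_one θ
    simp only [hcdef]; linarith
  have main : ∀ n : ℕ, ∀ a b : Pts S, a ≠ b → s(a, b) ∉ F →
      ({x : Pts S × Pts S | dist x.1.1 x.2.1 < dist a.1 b.1}).ncard < n →
      ∃ w : (Θ.deleteEdges F).Walk a b, wlen w ≤ (1 / c) * dist a.1 b.1 := by
    intro n
    induction n with
    | zero => intro a b _ _ h; exact absurd h (Nat.not_lt_zero _)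
    | succ n ih =>
      intro a b hab habF hcard
      have hba : (b.1 : EuclideanSpace ℝ (Fin d)) - a.1 ≠ 0 :=
        sub_ne_zero.2 (fun h => hab (Subtype.ext h.symm))
      obtain ⟨i, hi⟩ := hcover (b.1 - a.1)
      have hbT : (b.1 : EuclideanSpace ℝ (Fin d)) ∈ {x | x ∈ S ∧ x ≠ ↑a ∧ x - ↑a ∈ cone i} :=
        ⟨b.2, fun h => hab (Subtype.ext h.symm), hi⟩
      have hdab : (0:ℝ) < dist a.1 b.1 :=
        dist_pos.2 (fun h => hab (Subtype.ext h))
      by_cases hbN : (b.1 : EuclideanSpace ℝ (Fin d)) ∈ N a i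
      · -- direct edge
        have hadj : (Θ.deleteEdges F).Adj a b := by
          rw [SimpleGraph.deleteEdges_adj]
          exact ⟨(hΘ a b).2 ⟨hab, i, Or.inl hbN⟩, habF⟩
        refine ⟨SimpleGraph.Walk.cons hadj SimpleGraph.Walk.nil, ?_⟩
        rw [wlen_cons_s13]
        simp only [wlen, SimpleGraph.Walk.darts_nil, List.map_nil, List.sum_nil, add_zero]
        rw [Subtype.dist_eq]
        nlinarith
      · -- find an intermediate point r
        have hsubT := hNsub a i
        have hTfin : {x : EuclideanSpace ℝ (Fin d) | x ∈ S ∧ x ≠ ↑a ∧ x - ↑a ∈ cone i}.Finite :=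
          S.finite_toSet.subset (fun x hx => hx.1)
        have hssub : N a i ⊂ {x | x ∈ S ∧ x ≠ ↑a ∧ x - ↑a ∈ cone i} :=
          ⟨hsubT, fun hsup => hbN (hsup hbT)⟩
        have hltT := Set.ncard_lt_ncard hssub hTfin
        have hNc : (N a i).ncard = 2 * f + 1 := by
          have := hNcard a i; omega
        set M : Set (Pts S) := {x : Pts S | ↑x ∈ N a i} with hMdef
        have hMim : Subtype.val '' M = N a i := by
          ext x
          constructor
          · rintro ⟨y, hy, rfl⟩; exact hy
          · intro hx; exact ⟨⟨x, (hsubT hx).1⟩, hx, rfl⟩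
        have hMcard : M.ncard = 2 * f + 1 := by
          rw [← Set.ncard_image_of_injective M Subtype.val_injective, hMim, hNc]
        set Bad : Pts S → Set (Pts S) := fun z => {x | x ∈ M ∧ s(z, x) ∈ F} with hBdef
        have hbad : ∀ z : Pts S, (Bad z).ncard ≤ f := by
          intro z
          have hinj : Set.InjOn (fun x : Pts S => s(z, x)) (Bad z) :=
            fun x _ y _ h => Sym2.congr_right.mp h
          have him : (fun x : Pts S => s(z, x)) '' (Bad z) ⊆ {e | e ∈ F ∧ z ∈ e} := by
            rintro e ⟨x, hx, rfl⟩
            exact ⟨hx.2, Sym2.mem_mk_left z x⟩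
          calc (Bad z).ncard = ((fun x : Pts S => s(z, x)) '' Bad z).ncard :=
                (Set.ncard_image_of_injOn hinj).symm
            _ ≤ {e | e ∈ F ∧ z ∈ e}.ncard := Set.ncard_le_ncard him (Set.toFinite _)
            _ ≤ f := (Set.encard_le_coe_iff_finite_ncard_le.mp (hdeg z)).2
        have hnotall : ¬ (M ⊆ Bad a ∪ Bad b) := by
          intro hsub
          have h1 := Set.ncard_le_ncard hsub (Set.toFinite _)
          have h2 := Set.ncard_union_le (Bad a) (Bad b)
          have h3 := hbad a
          have h4 := hbad b
          omega
        obtain ⟨r, hrM, hrBad⟩ := Set.not_subset.1 hnotall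
        have hrN : (r.1 : EuclideanSpace ℝ (Fin d)) ∈ N a i := hrM
        have hra : (r.1 : EuclideanSpace ℝ (Fin d)) ≠ a.1 := (hsubT hrN).2.1
        have hrcone : (r.1 : EuclideanSpace ℝ (Fin d)) - a.1 ∈ cone i := (hsubT hrN).2.2
        have hraF : s(a, r) ∉ F := fun h => hrBad (Or.inl ⟨hrM, h⟩)
        have hrbF : s(r, b) ∉ F := by
          intro h
          exact hrBad (Or.inr ⟨hrM, by rwa [Sym2.eq_swap]⟩)
        have hrb : r ≠ b := fun h => hbN (h ▸ hrM)
        -- geometry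
        have hu0 : u i ≠ 0 := fun h => by simpa [h] using hu i
        have hucone : u i ∈ cone i := by simpa using hray i 1 zero_le_one
        have hra0 : (r.1 : EuclideanSpace ℝ (Fin d)) - a.1 ≠ 0 := sub_ne_zero.2 hra
        have hgeo := key_geom (v := (r.1 : EuclideanSpace ℝ (Fin d)) - a.1) (w := (b.1 : EuclideanSpace ℝ (Fin d)) - a.1) (u := u i)
          hθ0 hθ1 (hu i) hra0
          (hang i _ hrcone hra0 _ hi hba)
          (hang i _ hrcone hra0 _ hucone hu0)
          (hNclose a i _ hrN b.1 b.2 (fun h => hab (Subtype.ext h.symm)) hi hbN)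
        have hdrb : dist (r.1 : EuclideanSpace ℝ (Fin d)) b.1 ≤ dist a.1 b.1 - c * dist a.1 r.1 := by
          have e1 : ((b.1 : EuclideanSpace ℝ (Fin d)) - a.1) - (r.1 - a.1) = b.1 - r.1 := by abel
          rw [dist_eq_norm, dist_eq_norm, dist_eq_norm, norm_sub_rev (r.1 : EuclideanSpace ℝ (Fin d)) b.1,
            norm_sub_rev (a.1 : EuclideanSpace ℝ (Fin d)) b.1, norm_sub_rev (a.1 : EuclideanSpace ℝ (Fin d)) r.1]
          rw [e1] at hgeo
          exact hgeo
        have hdar : (0:ℝ) < dist a.1 r.1 := dist_pos.2 (Ne.symm hra)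
        have hlt2 : dist (r.1 : EuclideanSpace ℝ (Fin d)) b.1 < dist a.1 b.1 := by nlinarith
        -- recursion
        have hcard2 : ({x : Pts S × Pts S | dist x.1.1 x.2.1 < dist r.1 b.1}).ncard < n := by
          have hss : {x : Pts S × Pts S | dist x.1.1 x.2.1 < dist r.1 b.1} ⊂
              {x : Pts S × Pts S | dist x.1.1 x.2.1 < dist a.1 b.1} := by
            constructor
            · exact fun x hx => lt_trans hx hlt2
            · intro hsup
              have : ((r, b) : Pts S × Pts S) ∈
                  {x : Pts S × Pts S | dist x.1.1 x.2.1 < dist r.1 b.1} :=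
                hsup (show dist (r.1 : EuclideanSpace ℝ (Fin d)) b.1 < dist a.1 b.1 from hlt2)
              simp only [Set.mem_setOf_eq] at this
              exact absurd this (lt_irrefl _)
          have := Set.ncard_lt_ncard hss (Set.toFinite _)
          omega
        obtain ⟨w', hw'⟩ := ih r b hrb hrbF hcard2
        have hadj : (Θ.deleteEdges F).Adj a r := by
          rw [SimpleGraph.deleteEdges_adj]
          exact ⟨(hΘ a r).2 ⟨fun h => hra (congrArg Subtype.val h).symm, i, Or.inl hrN⟩, hraF⟩
        refine ⟨SimpleGraph.Walk.cons hadj w', ?_⟩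
        rw [wlen_cons_s13, Subtype.dist_eq]
        have htc : (1 / c) * c = 1 := one_div_mul_cancel hc0.ne'
        have hmul := mul_le_mul_of_nonneg_left hdrb (by positivity : (0:ℝ) ≤ 1 / c)
        nlinarith
  obtain ⟨w, hw⟩ := main (({x : Pts S × Pts S |
      dist x.1.1 x.2.1 < dist p.1 q.1}).ncard + 1) p q hpq hpqF (lt_add_one _)
  have hbdd : BddBelow {l : ℝ | ∃ w : (Θ.deleteEdges F).Walk p q, wlen w = l} :=
    ⟨0, fun l ⟨w', h⟩ => h ▸ wlen_nonneg_s13 w'⟩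
  calc gdist (Θ.deleteEdges F) p q ≤ wlen w := csInf_le hbdd ⟨w, rfl⟩
    _ ≤ (1 / c) * dist p.1 q.1 := hw
    _ = (1 / (Real.cos θ - Real.sin θ)) * dist p q := by rw [Subtype.dist_eq]
end

section
/- In the lower-bound graph H on the point set S = B_0 ∪ B_1 ∪ ... ∪ B_f, for each edge {p,q} of H, the shortest-path distance between p and q in H equals the weight of the edge {p,q}. -/
open Real

/-- Length of a walk in an edge-weighted graph: the sum of the weights of its edges. -/
noncomputable def wlenW {V : Type*} (wt : V → V → ℝ) {G : SimpleGraph V} {u v : V}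
    (w : G.Walk u v) : ℝ :=
  (w.darts.map fun d : G.Dart => wt d.toProd.1 d.toProd.2).sum

/-- Shortest-path distance between two vertices of an edge-weighted graph. -/
noncomputable def gdistW {V : Type*} (G : SimpleGraph V) (wt : V → V → ℝ) (p q : V) : ℝ :=
  sInf {l : ℝ | ∃ w : G.Walk p q, wlenW wt w = l}

theorem stmt16
    {V : Type*} [Fintype V] (f : ℕ) (hf : 3 ≤ f) (ε : ℝ)
    (hε0 : 0 < ε) (hε1 : ε * ((f : ℝ) - 2) < 1)
    -- the points b_0, ..., b_f (forming B_0) and the sets B_1, ..., B_f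
    (b : ℕ → V) (B : ℕ → Set V)
    (hbinj : ∀ i ≤ f, ∀ j ≤ f, b i = b j → i = j)
    (hBcard : ∀ i, 1 ≤ i → i ≤ f → (B i).ncard = 2 * f)
    (hBdisj : ∀ i j, 1 ≤ i → i ≤ f → 1 ≤ j → j ≤ f → i ≠ j → B i ∩ B j = ∅)
    (hbB : ∀ i, 1 ≤ i → i ≤ f → ∀ j ≤ f, b j ∉ B i)
    (hcover : ∀ v : V, (∃ j ≤ f, v = b j) ∨ ∃ i, 1 ≤ i ∧ i ≤ f ∧ v ∈ B i)
    -- the edges of the graph H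
    (H : SimpleGraph V)
    (hH : ∀ x y : V, H.Adj x y ↔
      s(x, y) = s(b 0, b f) ∨
      s(x, y) = s(b 0, b 1) ∨
      s(x, y) = s(b (f - 1), b f) ∨
      (∃ j, 1 ≤ j ∧ j ≤ f - 2 ∧ s(x, y) = s(b j, b (j + 1))) ∨
      (∃ i, 1 ≤ i ∧ i ≤ f ∧ x ∈ B i ∧ y ∈ B i ∧ x ≠ y) ∨
      (∃ i, 1 ≤ i ∧ i ≤ f ∧
        ((x ∈ B i ∧ (y = b (i - 1) ∨ y = b i)) ∨ (y ∈ B i ∧ (x = b (i - 1) ∨ x = b i)))))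
    -- the edge weights of H
    (wt : V → V → ℝ) (hwtsymm : ∀ x y, wt x y = wt y x)
    (hw1 : wt (b 0) (b f) = 1 + ε)
    (hw2 : wt (b 0) (b 1) = 1) (hw3 : wt (b (f - 1)) (b f) = 1)
    (hw4 : ∀ j, 1 ≤ j → j ≤ f - 2 → wt (b j) (b (j + 1)) = ε)
    (hw5 : ∀ i, 1 ≤ i → i ≤ f → ∀ x ∈ B i, ∀ y ∈ B i, x ≠ y → wt x y = ε)
    (hw6 : ∀ i, 1 ≤ i → i ≤ f → ∀ x ∈ B i, wt x (b (i - 1)) = 1 ∧ wt x (b i) = 1)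
    :
    -- each edge of H is a shortest path in H
    ∀ x y : V, H.Adj x y → gdistW H wt x y = wt x y := by
  classical
  have hf3 : (3:ℝ) ≤ (f:ℝ) := by exact_mod_cast hf
  have hεle1 : ε ≤ 1 := by nlinarith [mul_nonneg hε0.le (by linarith : (0:ℝ) ≤ (f:ℝ) - 3)]
  -- every edge has weight at least ε
  have hA : ∀ u v, H.Adj u v → ε ≤ wt u v := by
    intro u v huv
    rw [hH] at huv
    rcases huv with h | h | h | ⟨j, hj1, hj2, h⟩ | ⟨i, hi1, hi2, hu, hv, huvne⟩ |
        ⟨i, hi1, hi2, h⟩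
    · rcases Sym2.eq_iff.1 h with ⟨rfl, rfl⟩ | ⟨rfl, rfl⟩
      · rw [hw1]; linarith
      · rw [hwtsymm, hw1]; linarith
    · rcases Sym2.eq_iff.1 h with ⟨rfl, rfl⟩ | ⟨rfl, rfl⟩
      · rw [hw2]; linarith
      · rw [hwtsymm, hw2]; linarith
    · rcases Sym2.eq_iff.1 h with ⟨rfl, rfl⟩ | ⟨rfl, rfl⟩
      · rw [hw3]; linarith
      · rw [hwtsymm, hw3]; linarith
    · rcases Sym2.eq_iff.1 h with ⟨rfl, rfl⟩ | ⟨rfl, rfl⟩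
      · rw [hw4 j hj1 hj2]
      · rw [hwtsymm, hw4 j hj1 hj2]
    · rw [hw5 i hi1 hi2 u hu v hv huvne]
    · rcases h with ⟨hu, rfl | rfl⟩ | ⟨hv, rfl | rfl⟩
      · rw [(hw6 i hi1 hi2 u hu).1]; linarith
      · rw [(hw6 i hi1 hi2 u hu).2]; linarith
      · rw [hwtsymm, (hw6 i hi1 hi2 v hv).1]; linarith
      · rw [hwtsymm, (hw6 i hi1 hi2 v hv).2]; linarith
  -- every edge incident to b 0 has weight at least 1
  have hA0 : ∀ v, H.Adj (b 0) v → 1 ≤ wt (b 0) v := by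
    intro v huv
    have hne := huv.ne
    rw [hH] at huv
    rcases huv with h | h | h | ⟨j, hj1, hj2, h⟩ | ⟨i, hi1, hi2, hu, hv, huvne⟩ |
        ⟨i, hi1, hi2, h⟩
    · rcases Sym2.eq_iff.1 h with ⟨-, rfl⟩ | ⟨h1, rfl⟩
      · rw [hw1]; linarith
      · exact absurd rfl hne
    · rcases Sym2.eq_iff.1 h with ⟨-, rfl⟩ | ⟨h1, rfl⟩
      · rw [hw2]
      · exact absurd rfl hne
    · rcases Sym2.eq_iff.1 h with ⟨h1, rfl⟩ | ⟨h1, rfl⟩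
      · rw [h1, hw3]
      · rw [h1, hwtsymm, hw3]
    · rcases Sym2.eq_iff.1 h with ⟨h1, rfl⟩ | ⟨h1, rfl⟩
      · have := hbinj 0 (Nat.zero_le f) j (by omega) h1; omega
      · have := hbinj 0 (Nat.zero_le f) (j + 1) (by omega) h1; omega
    · exact absurd hu (hbB i hi1 hi2 0 (Nat.zero_le f))
    · rcases h with ⟨hu, -⟩ | ⟨hv, h1 | h1⟩
      · exact absurd hu (hbB i hi1 hi2 0 (Nat.zero_le f))
      · rw [h1, hwtsymm, (hw6 i hi1 hi2 v hv).1]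
      · rw [h1, hwtsymm, (hw6 i hi1 hi2 v hv).2]
  -- every edge incident to b f has weight at least 1
  have hAf : ∀ v, H.Adj (b f) v → 1 ≤ wt (b f) v := by
    intro v huv
    have hne := huv.ne
    rw [hH] at huv
    rcases huv with h | h | h | ⟨j, hj1, hj2, h⟩ | ⟨i, hi1, hi2, hu, hv, huvne⟩ |
        ⟨i, hi1, hi2, h⟩
    · rcases Sym2.eq_iff.1 h with ⟨h1, rfl⟩ | ⟨-, rfl⟩
      · exact absurd rfl hne
      · rw [hwtsymm, hw1]; linarith
    · rcases Sym2.eq_iff.1 h with ⟨h1, rfl⟩ | ⟨h1, rfl⟩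
      · have := hbinj f le_rfl 0 (Nat.zero_le f) h1; omega
      · have := hbinj f le_rfl 1 (by omega) h1; omega
    · rcases Sym2.eq_iff.1 h with ⟨h1, rfl⟩ | ⟨-, rfl⟩
      · exact absurd rfl hne
      · rw [hwtsymm, hw3]
    · rcases Sym2.eq_iff.1 h with ⟨h1, rfl⟩ | ⟨h1, rfl⟩
      · have := hbinj f le_rfl j (by omega) h1; omega
      · have := hbinj f le_rfl (j + 1) (by omega) h1; omega
    · exact absurd hu (hbB i hi1 hi2 f le_rfl)
    · rcases h with ⟨hu, -⟩ | ⟨hv, h1 | h1⟩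
      · exact absurd hu (hbB i hi1 hi2 f le_rfl)
      · rw [h1, hwtsymm, (hw6 i hi1 hi2 v hv).1]
      · rw [h1, hwtsymm, (hw6 i hi1 hi2 v hv).2]
  -- every edge leaving B i has weight at least 1
  have hAB : ∀ i, 1 ≤ i → i ≤ f → ∀ u v, H.Adj u v → u ∈ B i → v ∉ B i → 1 ≤ wt u v := by
    intro i hi1 hi2 u v huv hu hv
    rw [hH] at huv
    rcases huv with h | h | h | ⟨j, hj1, hj2, h⟩ | ⟨i', hi1', hi2', hu', hv', huvne⟩ |
        ⟨i', hi1', hi2', h⟩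
    · rcases Sym2.eq_iff.1 h with ⟨rfl, -⟩ | ⟨rfl, -⟩
      · exact absurd hu (hbB i hi1 hi2 0 (Nat.zero_le f))
      · exact absurd hu (hbB i hi1 hi2 f le_rfl)
    · rcases Sym2.eq_iff.1 h with ⟨rfl, -⟩ | ⟨rfl, -⟩
      · exact absurd hu (hbB i hi1 hi2 0 (Nat.zero_le f))
      · exact absurd hu (hbB i hi1 hi2 1 (by omega))
    · rcases Sym2.eq_iff.1 h with ⟨rfl, -⟩ | ⟨rfl, -⟩
      · exact absurd hu (hbB i hi1 hi2 (f - 1) (by omega))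
      · exact absurd hu (hbB i hi1 hi2 f le_rfl)
    · rcases Sym2.eq_iff.1 h with ⟨rfl, -⟩ | ⟨rfl, -⟩
      · exact absurd hu (hbB i hi1 hi2 j (by omega))
      · exact absurd hu (hbB i hi1 hi2 (j + 1) (by omega))
    · by_cases hii : i' = i
      · subst hii; exact absurd hv' hv
      · have hdis := hBdisj i i' hi1 hi2 hi1' hi2' (fun h' => hii h'.symm)
        have : u ∈ B i ∩ B i' := ⟨hu, hu'⟩
        rw [hdis] at this
        exact this.elim
    · rcases h with ⟨hu', rfl | rfl⟩ | ⟨hv', rfl | rfl⟩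
      · rw [(hw6 i' hi1' hi2' u hu').1]
      · rw [(hw6 i' hi1' hi2' u hu').2]
      · exact absurd hu (hbB i hi1 hi2 (i' - 1) (by omega))
      · exact absurd hu (hbB i hi1 hi2 i' hi2')
  -- walk length machinery
  have hwlen_cons : ∀ {p q r : V} (h : H.Adj p q) (w : H.Walk q r),
      wlenW wt (SimpleGraph.Walk.cons h w) = wt p q + wlenW wt w := by
    intro p q r h w
    simp [wlenW]
  have hnn : ∀ {p q : V} (w : H.Walk p q), 0 ≤ wlenW wt w := by
    intro p q w
    induction w with
    | nil => simp [wlenW]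
    | cons h w' ih =>
      rw [hwlen_cons]
      have := hA _ _ h
      linarith
  have hgeε : ∀ {p q : V}, p ≠ q → ∀ w : H.Walk p q, ε ≤ wlenW wt w := by
    intro p q hpq w
    cases w with
    | nil => exact absurd rfl hpq
    | cons h w' =>
      rw [hwlen_cons]
      have h1 := hA _ _ h
      have h2 := hnn w'
      linarith
  have hpot : ∀ φ : V → ℝ, (∀ u v, H.Adj u v → |φ u - φ v| ≤ wt u v) →
      ∀ {p q : V} (w : H.Walk p q), |φ p - φ q| ≤ wlenW wt w := by
    intro φ hφ p q w
    induction w with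
    | nil => simp [wlenW]
    | @cons u v r h w' ih =>
      rw [hwlen_cons]
      calc |φ u - φ r| ≤ |φ u - φ v| + |φ v - φ r| := abs_sub_le _ _ _
        _ ≤ wt u v + wlenW wt w' := add_le_add (hφ u v h) ih
  intro x y hxy
  have hup : gdistW H wt x y ≤ wt x y := by
    simp only [gdistW]
    apply csInf_le
    · exact ⟨0, by rintro l ⟨w, rfl⟩; exact hnn w⟩
    · exact ⟨SimpleGraph.Walk.cons hxy SimpleGraph.Walk.nil, by
        rw [hwlen_cons]; simp [wlenW]⟩
  have hlow : ∀ r : ℝ, (∀ w : H.Walk x y, r ≤ wlenW wt w) → r ≤ gdistW H wt x y := by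
    intro r hr
    simp only [gdistW]
    apply le_csInf
    · exact ⟨wt x y, SimpleGraph.Walk.cons hxy SimpleGraph.Walk.nil, by
        rw [hwlen_cons]; simp [wlenW]⟩
    · rintro l ⟨w, rfl⟩
      exact hr w
  have hadj := hxy
  rw [hH] at hadj
  rcases hadj with h | h | h | ⟨j, hj1, hj2, h⟩ | ⟨i, hi1, hi2, hxB, hyB, hxyne⟩ |
      ⟨i, hi1, hi2, h⟩
  · -- the edge {b 0, b f}, weight 1 + ε
    set φ : V → ℝ := fun v => if v = b 0 then 0 else if v = b f then 1 + ε else 1 with hφdef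
    have hb0f : b 0 ≠ b f := fun h' => by
      have := hbinj 0 (Nat.zero_le f) f le_rfl h'; omega
    have v0 : φ (b 0) = 0 := by simp [hφdef]
    have vf : φ (b f) = 1 + ε := by simp [hφdef, hb0f.symm]
    have vo : ∀ z, z ≠ b 0 → z ≠ b f → φ z = 1 := fun z h1 h2 => by simp [hφdef, h1, h2]
    have hφ : ∀ u v, H.Adj u v → |φ u - φ v| ≤ wt u v := by
      intro u v huv
      have hne := huv.ne
      by_cases hu0 : u = b 0
      · subst hu0
        by_cases hvf : v = b f
        · subst hvf
          rw [v0, vf, hw1, zero_sub, abs_neg, abs_of_pos (by linarith)]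
        · rw [v0, vo v hne.symm hvf, zero_sub, abs_neg, abs_one]
          exact hA0 v huv
      · by_cases huf : u = b f
        · subst huf
          by_cases hv0 : v = b 0
          · subst hv0
            rw [vf, v0, hwtsymm, hw1, sub_zero, abs_of_pos (by linarith)]
          · rw [vf, vo v hv0 hne.symm, add_sub_cancel_left, abs_of_pos hε0]
            exact hA _ _ huv
        · by_cases hv0 : v = b 0
          · subst hv0
            rw [vo u hu0 huf, v0, sub_zero, abs_one, hwtsymm]
            exact hA0 u huv.symm
          · by_cases hvf : v = b f
            · subst hvf
              rw [vo u hu0 huf, vf, show (1:ℝ) - (1 + ε) = -ε by ring, abs_neg,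
                abs_of_pos hε0]
              exact hA _ _ huv
            · rw [vo u hu0 huf, vo v hv0 hvf, sub_self, abs_zero]
              exact le_trans hε0.le (hA _ _ huv)
    rcases Sym2.eq_iff.1 h with ⟨rfl, rfl⟩ | ⟨rfl, rfl⟩
    · refine le_antisymm hup (hlow _ fun w => ?_)
      have hp := hpot φ hφ w
      rw [v0, vf, zero_sub, abs_neg, abs_of_pos (by linarith)] at hp
      rw [hw1]; exact hp
    · refine le_antisymm hup (hlow _ fun w => ?_)
      have hp := hpot φ hφ w
      rw [vf, v0, sub_zero, abs_of_pos (by linarith)] at hp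
      rw [hwtsymm, hw1]; exact hp
  · -- the edge {b 0, b 1}, weight 1
    set φ : V → ℝ := fun v => if v = b 0 then 0 else 1 with hφdef
    have v0 : φ (b 0) = 0 := by simp [hφdef]
    have vo : ∀ z, z ≠ b 0 → φ z = 1 := fun z hz => by simp [hφdef, hz]
    have hφ : ∀ u v, H.Adj u v → |φ u - φ v| ≤ wt u v := by
      intro u v huv
      by_cases hu0 : u = b 0
      · subst hu0
        rw [v0, vo v huv.ne.symm, zero_sub, abs_neg, abs_one]
        exact hA0 v huv
      · by_cases hv0 : v = b 0
        · subst hv0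
          rw [vo u hu0, v0, sub_zero, abs_one, hwtsymm]
          exact hA0 u huv.symm
        · rw [vo u hu0, vo v hv0, sub_self, abs_zero]
          exact le_trans hε0.le (hA _ _ huv)
    have hb10 : b 1 ≠ b 0 := fun h' => by
      have := hbinj 1 (by omega) 0 (Nat.zero_le f) h'; omega
    rcases Sym2.eq_iff.1 h with ⟨rfl, rfl⟩ | ⟨rfl, rfl⟩
    · refine le_antisymm hup (hlow _ fun w => ?_)
      have hp := hpot φ hφ w
      rw [v0, vo _ hb10, zero_sub, abs_neg, abs_one] at hp
      rw [hw2]; exact hp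
    · refine le_antisymm hup (hlow _ fun w => ?_)
      have hp := hpot φ hφ w
      rw [vo _ hb10, v0, sub_zero, abs_one] at hp
      rw [hwtsymm, hw2]; exact hp
  · -- the edge {b (f-1), b f}, weight 1
    set φ : V → ℝ := fun v => if v = b f then 0 else 1 with hφdef
    have v0 : φ (b f) = 0 := by simp [hφdef]
    have vo : ∀ z, z ≠ b f → φ z = 1 := fun z hz => by simp [hφdef, hz]
    have hφ : ∀ u v, H.Adj u v → |φ u - φ v| ≤ wt u v := by
      intro u v huv
      by_cases hu0 : u = b f
      · subst hu0
        rw [v0, vo v huv.ne.symm, zero_sub, abs_neg, abs_one]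
        exact hAf v huv
      · by_cases hv0 : v = b f
        · subst hv0
          rw [vo u hu0, v0, sub_zero, abs_one, hwtsymm]
          exact hAf u huv.symm
        · rw [vo u hu0, vo v hv0, sub_self, abs_zero]
          exact le_trans hε0.le (hA _ _ huv)
    have hbf1f : b (f - 1) ≠ b f := fun h' => by
      have := hbinj (f - 1) (by omega) f le_rfl h'; omega
    rcases Sym2.eq_iff.1 h with ⟨rfl, rfl⟩ | ⟨rfl, rfl⟩
    · refine le_antisymm hup (hlow _ fun w => ?_)
      have hp := hpot φ hφ w
      rw [vo _ hbf1f, v0, sub_zero, abs_one] at hp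
      rw [hw3]; exact hp
    · refine le_antisymm hup (hlow _ fun w => ?_)
      have hp := hpot φ hφ w
      rw [v0, vo _ hbf1f, zero_sub, abs_neg, abs_one] at hp
      rw [hwtsymm, hw3]; exact hp
  · -- a chain edge {b j, b (j+1)}, weight ε
    rcases Sym2.eq_iff.1 h with ⟨rfl, rfl⟩ | ⟨rfl, rfl⟩
    · refine le_antisymm hup (hlow _ fun w => ?_)
      rw [hw4 j hj1 hj2]
      exact hgeε hxy.ne w
    · refine le_antisymm hup (hlow _ fun w => ?_)
      rw [hwtsymm, hw4 j hj1 hj2]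
      exact hgeε hxy.ne w
  · -- an edge inside B i, weight ε
    refine le_antisymm hup (hlow _ fun w => ?_)
    rw [hw5 i hi1 hi2 x hxB y hyB hxyne]
    exact hgeε hxy.ne w
  · -- an edge from B i to b (i-1) or b i, weight 1
    set φ : V → ℝ := fun v => if v ∈ B i then 0 else 1 with hφdef
    have vin : ∀ z, z ∈ B i → φ z = 0 := fun z hz => by simp [hφdef, hz]
    have vout : ∀ z, z ∉ B i → φ z = 1 := fun z hz => by simp [hφdef, hz]
    have hφ : ∀ u v, H.Adj u v → |φ u - φ v| ≤ wt u v := by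
      intro u v huv
      by_cases hu : u ∈ B i <;> by_cases hv : v ∈ B i
      · rw [vin u hu, vin v hv, sub_self, abs_zero]
        exact le_trans hε0.le (hA _ _ huv)
      · rw [vin u hu, vout v hv, zero_sub, abs_neg, abs_one]
        exact hAB i hi1 hi2 u v huv hu hv
      · rw [vout u hu, vin v hv, sub_zero, abs_one, hwtsymm]
        exact hAB i hi1 hi2 v u huv.symm hv hu
      · rw [vout u hu, vout v hv, sub_self, abs_zero]
        exact le_trans hε0.le (hA _ _ huv)
    rcases h with ⟨hxB, rfl | rfl⟩ | ⟨hyB, rfl | rfl⟩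
    · have hyout : b (i - 1) ∉ B i := hbB i hi1 hi2 (i - 1) (by omega)
      refine le_antisymm hup (hlow _ fun w => ?_)
      have hp := hpot φ hφ w
      rw [vin x hxB, vout _ hyout, zero_sub, abs_neg, abs_one] at hp
      rw [(hw6 i hi1 hi2 x hxB).1]; exact hp
    · have hyout : b i ∉ B i := hbB i hi1 hi2 i hi2
      refine le_antisymm hup (hlow _ fun w => ?_)
      have hp := hpot φ hφ w
      rw [vin x hxB, vout _ hyout, zero_sub, abs_neg, abs_one] at hp
      rw [(hw6 i hi1 hi2 x hxB).2]; exact hp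
    · have hxout : b (i - 1) ∉ B i := hbB i hi1 hi2 (i - 1) (by omega)
      refine le_antisymm hup (hlow _ fun w => ?_)
      have hp := hpot φ hφ w
      rw [vout _ hxout, vin y hyB, sub_zero, abs_one] at hp
      rw [hwtsymm, (hw6 i hi1 hi2 y hyB).1]; exact hp
    · have hxout : b i ∉ B i := hbB i hi1 hi2 i hi2
      refine le_antisymm hup (hlow _ fun w => ?_)
      have hp := hpot φ hφ w
      rw [vout _ hxout, vin y hyB, sub_zero, abs_one] at hp
      rw [hwtsymm, (hw6 i hi1 hi2 y hyB).2]; exact hp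
end

section
/- The graph G' obtained from the lower-bound graph H by removing the edge {b_0,b_f} is a 3-spanner for the metric space (S,|·|), where |pq| is the shortest-path distance in H: for all p, q ∈ S, the shortest-path distance in G' between p and q is at most 3·|pq|. -/
open Real

section helpers
variable {V : Type*}

lemma wlenW_cons' (wt : V → V → ℝ) {G : SimpleGraph V} {u v w : V}
    (h : G.Adj u v) (p : G.Walk v w) :
    wlenW wt (SimpleGraph.Walk.cons h p) = wt u v + wlenW wt p := by
  simp [wlenW]

lemma wlenW_append' (wt : V → V → ℝ) {G : SimpleGraph V} {u v w : V}
    (p : G.Walk u v) (q : G.Walk v w) :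
    wlenW wt (p.append q) = wlenW wt p + wlenW wt q := by
  simp [wlenW, SimpleGraph.Walk.darts_append]

lemma wlenW_reverse' (wt : V → V → ℝ) (hs : ∀ x y, wt x y = wt y x)
    {G : SimpleGraph V} {u v : V} (p : G.Walk u v) :
    wlenW wt p.reverse = wlenW wt p := by
  simp only [wlenW, SimpleGraph.Walk.darts_reverse, List.map_reverse, List.sum_reverse,
    List.map_map]
  congr 1
  apply List.map_congr_left
  intro d _
  simp [hs d.toProd.2 d.toProd.1]

end helpers

theorem stmt17
    {V : Type*} [Fintype V] (f : ℕ) (hf : 3 ≤ f) (ε : ℝ)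
    (hε0 : 0 < ε) (hε1 : ε * ((f : ℝ) - 2) < 1)
    -- the points b_0, ..., b_f (forming B_0) and the sets B_1, ..., B_f
    (b : ℕ → V) (B : ℕ → Set V)
    (hbinj : ∀ i ≤ f, ∀ j ≤ f, b i = b j → i = j)
    (hBcard : ∀ i, 1 ≤ i → i ≤ f → (B i).ncard = 2 * f)
    (hBdisj : ∀ i j, 1 ≤ i → i ≤ f → 1 ≤ j → j ≤ f → i ≠ j → B i ∩ B j = ∅)
    (hbB : ∀ i, 1 ≤ i → i ≤ f → ∀ j ≤ f, b j ∉ B i)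
    (hcover : ∀ v : V, (∃ j ≤ f, v = b j) ∨ ∃ i, 1 ≤ i ∧ i ≤ f ∧ v ∈ B i)
    -- the edges of the graph H
    (H : SimpleGraph V)
    (hH : ∀ x y : V, H.Adj x y ↔
      s(x, y) = s(b 0, b f) ∨
      s(x, y) = s(b 0, b 1) ∨
      s(x, y) = s(b (f - 1), b f) ∨
      (∃ j, 1 ≤ j ∧ j ≤ f - 2 ∧ s(x, y) = s(b j, b (j + 1))) ∨
      (∃ i, 1 ≤ i ∧ i ≤ f ∧ x ∈ B i ∧ y ∈ B i ∧ x ≠ y) ∨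
      (∃ i, 1 ≤ i ∧ i ≤ f ∧
        ((x ∈ B i ∧ (y = b (i - 1) ∨ y = b i)) ∨ (y ∈ B i ∧ (x = b (i - 1) ∨ x = b i)))))
    -- the edge weights of H
    (wt : V → V → ℝ) (hwtsymm : ∀ x y, wt x y = wt y x)
    (hw1 : wt (b 0) (b f) = 1 + ε)
    (hw2 : wt (b 0) (b 1) = 1) (hw3 : wt (b (f - 1)) (b f) = 1)
    (hw4 : ∀ j, 1 ≤ j → j ≤ f - 2 → wt (b j) (b (j + 1)) = ε)
    (hw5 : ∀ i, 1 ≤ i → i ≤ f → ∀ x ∈ B i, ∀ y ∈ B i, x ≠ y → wt x y = ε)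
    (hw6 : ∀ i, 1 ≤ i → i ≤ f → ∀ x ∈ B i, wt x (b (i - 1)) = 1 ∧ wt x (b i) = 1)
    :
    -- G' = H minus the edge {b_0, b_f} is a 3-spanner for the shortest-path
    -- metric |pq| = gdistW H wt of H
    ∀ p q : V, gdistW (H.deleteEdges {s(b 0, b f)}) wt p q ≤ 3 * gdistW H wt p q := by
    classical
  set G' := H.deleteEdges {s(b 0, b f)} with hG'
  -- nonnegativity of weights on H-edges
  have hwnn : ∀ x y : V, H.Adj x y → 0 ≤ wt x y := by
    intro x y h
    rw [hH] at h
    rcases h with h | h | h | ⟨j, hj1, hj2, h⟩ | ⟨i, hi1, hi2, hx, hy, hxy⟩ | ⟨i, hi1, hi2, h⟩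
    · rcases Sym2.eq_iff.mp h with ⟨rfl, rfl⟩ | ⟨rfl, rfl⟩
      · rw [hw1]; linarith
      · rw [hwtsymm, hw1]; linarith
    · rcases Sym2.eq_iff.mp h with ⟨rfl, rfl⟩ | ⟨rfl, rfl⟩
      · rw [hw2]; linarith
      · rw [hwtsymm, hw2]; linarith
    · rcases Sym2.eq_iff.mp h with ⟨rfl, rfl⟩ | ⟨rfl, rfl⟩
      · rw [hw3]; linarith
      · rw [hwtsymm, hw3]; linarith
    · rcases Sym2.eq_iff.mp h with ⟨rfl, rfl⟩ | ⟨rfl, rfl⟩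
      · rw [hw4 j hj1 hj2]; linarith
      · rw [hwtsymm, hw4 j hj1 hj2]; linarith
    · rw [hw5 i hi1 hi2 x hx y hy hxy]; linarith
    · rcases h with ⟨hx, rfl | rfl⟩ | ⟨hy, rfl | rfl⟩
      · rw [(hw6 i hi1 hi2 x hx).1]; linarith
      · rw [(hw6 i hi1 hi2 x hx).2]; linarith
      · rw [hwtsymm, (hw6 i hi1 hi2 y hy).1]; linarith
      · rw [hwtsymm, (hw6 i hi1 hi2 y hy).2]; linarith
  -- sym2 equality analysis
  have hS : ∀ j k : ℕ, j ≤ f → k ≤ f → s(b j, b k) = s(b 0, b f) →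
      (j = 0 ∧ k = f) ∨ (j = f ∧ k = 0) := by
    intro j k hj hk h
    rcases Sym2.eq_iff.mp h with ⟨h1, h2⟩ | ⟨h1, h2⟩
    · exact Or.inl ⟨hbinj j hj 0 (Nat.zero_le f) h1, hbinj k hk f le_rfl h2⟩
    · exact Or.inr ⟨hbinj j hj f le_rfl h1, hbinj k hk 0 (Nat.zero_le f) h2⟩
  have hf1 : (1:ℕ) ≤ f - 1 := by omega
  -- the detour from b 0 to b f in G'
  have hchain : ∀ k : ℕ, 1 ≤ k → k ≤ f - 1 →
      ∃ w : G'.Walk (b 1) (b k), wlenW wt w = ((k : ℝ) - 1) * ε := by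
    intro k hk1 hk2
    induction k, hk1 using Nat.le_induction with
    | base => exact ⟨SimpleGraph.Walk.nil, by simp [wlenW]⟩
    | succ k hk ih =>
      obtain ⟨w, hw⟩ := ih (by omega)
      have hadjH : H.Adj (b k) (b (k + 1)) := by
        rw [hH]; exact Or.inr (Or.inr (Or.inr (Or.inl ⟨k, hk, by omega, rfl⟩)))
      have hadj : G'.Adj (b k) (b (k + 1)) := by
        rw [hG', SimpleGraph.deleteEdges_adj]
        refine ⟨hadjH, ?_⟩
        intro hmem
        rcases hS k (k + 1) (by omega) (by omega) hmem with ⟨h1, h2⟩ | ⟨h1, h2⟩ <;> omega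
      refine ⟨w.append (SimpleGraph.Walk.cons hadj SimpleGraph.Walk.nil), ?_⟩
      rw [wlenW_append', hw, wlenW_cons', hw4 k hk (by omega)]
      have : wlenW wt (SimpleGraph.Walk.nil : G'.Walk (b (k+1)) (b (k+1))) = 0 := by
        simp [wlenW]
      rw [this]
      push_cast
      ring
  obtain ⟨wc, hwc⟩ := hchain (f - 1) hf1 le_rfl
  have hadj01H : H.Adj (b 0) (b 1) := by rw [hH]; exact Or.inr (Or.inl rfl)
  have hadj01 : G'.Adj (b 0) (b 1) := by
    rw [hG', SimpleGraph.deleteEdges_adj]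
    refine ⟨hadj01H, fun hmem => ?_⟩
    rcases hS 0 1 (by omega) (by omega) hmem with ⟨h1, h2⟩ | ⟨h1, h2⟩ <;> omega
  have hadjfH : H.Adj (b (f - 1)) (b f) := by rw [hH]; exact Or.inr (Or.inr (Or.inl rfl))
  have hadjf : G'.Adj (b (f - 1)) (b f) := by
    rw [hG', SimpleGraph.deleteEdges_adj]
    refine ⟨hadjfH, fun hmem => ?_⟩
    rcases hS (f - 1) f (by omega) le_rfl hmem with ⟨h1, h2⟩ | ⟨h1, h2⟩ <;> omega
  -- full detour walk
  set wd : G'.Walk (b 0) (b f) :=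
    SimpleGraph.Walk.cons hadj01
      (wc.append (SimpleGraph.Walk.cons hadjf SimpleGraph.Walk.nil)) with hwd
  have hwdlen : wlenW wt wd = 2 + ((f : ℝ) - 2) * ε := by
    rw [hwd, wlenW_cons', wlenW_append', hwc, wlenW_cons', hw2, hw3]
    have : wlenW wt (SimpleGraph.Walk.nil : G'.Walk (b f) (b f)) = 0 := by simp [wlenW]
    rw [this]
    have hcast : ((f - 1 : ℕ) : ℝ) = (f : ℝ) - 1 := by
      have : (1:ℕ) ≤ f := by omega
      push_cast [Nat.cast_sub this]
      ring
    rw [hcast]; ring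
  have hdet : wlenW wt wd ≤ 3 * (1 + ε) := by
    rw [hwdlen]
    nlinarith [hε0, hε1]
  -- per-edge replacement
  have hedge : ∀ x y : V, H.Adj x y → ∃ w : G'.Walk x y, wlenW wt w ≤ 3 * wt x y := by
    intro x y h
    by_cases hdel : s(x, y) = s(b 0, b f)
    · rcases Sym2.eq_iff.mp hdel with ⟨rfl, rfl⟩ | ⟨rfl, rfl⟩
      · exact ⟨wd, by rw [hw1]; exact hdet⟩
      · refine ⟨wd.reverse, ?_⟩
        rw [wlenW_reverse' wt hwtsymm, hwtsymm, hw1]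
        exact hdet
    · have hadj : G'.Adj x y := by
        rw [hG', SimpleGraph.deleteEdges_adj]
        exact ⟨h, by simpa using hdel⟩
      refine ⟨SimpleGraph.Walk.cons hadj SimpleGraph.Walk.nil, ?_⟩
      rw [wlenW_cons']
      have : wlenW wt (SimpleGraph.Walk.nil : G'.Walk y y) = 0 := by simp [wlenW]
      rw [this]
      have := hwnn x y h
      linarith
  -- walk transformation
  have htrans : ∀ {p q : V} (w : H.Walk p q),
      ∃ w' : G'.Walk p q, wlenW wt w' ≤ 3 * wlenW wt w := by
    intro p q w
    induction w with
    | nil => exact ⟨SimpleGraph.Walk.nil, by simp [wlenW]⟩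
    | cons h w ih =>
      obtain ⟨w1, h1⟩ := hedge _ _ h
      obtain ⟨w2, h2⟩ := ih
      refine ⟨w1.append w2, ?_⟩
      rw [wlenW_append', wlenW_cons']
      linarith
  -- nonnegativity of G'-walk lengths
  have hnnG : ∀ {u v : V} (w : G'.Walk u v), 0 ≤ wlenW wt w := by
    intro u v w
    apply List.sum_nonneg
    intro x hx
    rw [List.mem_map] at hx
    obtain ⟨d, _, rfl⟩ := hx
    have : H.Adj d.toProd.1 d.toProd.2 := ((SimpleGraph.deleteEdges_adj).mp d.adj).1
    exact hwnn _ _ this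
  -- conclusion
  intro p q
  by_cases hne : ({l : ℝ | ∃ w : H.Walk p q, wlenW wt w = l}).Nonempty
  · have hbd : BddBelow {l : ℝ | ∃ w : G'.Walk p q, wlenW wt w = l} := by
      refine ⟨0, ?_⟩
      rintro l ⟨w, rfl⟩
      exact hnnG w
    have h1 : ∀ l ∈ {l : ℝ | ∃ w : H.Walk p q, wlenW wt w = l},
        gdistW G' wt p q ≤ 3 * l := by
      rintro l ⟨w, rfl⟩
      obtain ⟨w', hw'⟩ := htrans w
      exact le_trans (csInf_le hbd ⟨w', rfl⟩) hw'
    have h2 : gdistW G' wt p q / 3 ≤ gdistW H wt p q := by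
      apply le_csInf hne
      intro l hl
      linarith [h1 l hl]
    linarith
  · rw [Set.not_nonempty_iff_eq_empty] at hne
    have hG'e : {l : ℝ | ∃ w : G'.Walk p q, wlenW wt w = l} = ∅ := by
      rw [Set.eq_empty_iff_forall_notMem]
      rintro l ⟨w, rfl⟩
      have : wlenW wt (w.mapLe (SimpleGraph.deleteEdges_le _)) ∈
          {l : ℝ | ∃ w : H.Walk p q, wlenW wt w = l} := ⟨_, rfl⟩
      rw [hne] at this
      exact this
    rw [gdistW, gdistW, hne, hG'e, Real.sInf_empty]
    norm_num
end
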